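/- With λ = (1/n) Σ_{j,r} p_{j,r} and S_n the random diagonal sum, the variance satisfies Var(S_n) = λ − (n/(n-1)) ( Σ_j (p̄_{j,·})² + Σ_r (p̄_{·,r})² − (1/n²) Σ_{(j,r)} p_{j,r}² − λ²/n ), where p̄_{j,·} = (1/n)Σ_r p_{j,r} and p̄_{·,r} = (1/n)Σ_j p_{j,r}. -/

import Mathlib

/-!
Conditionally on `π = σ` the entries are independent, so `E[S_n | σ] = ∑ j, p j (σ j)` and
`E[S_n² | σ] = ∑ j, p j (σ j) + ∑_{j ≠ k} p j (σ j) * p k (σ k)`.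
Averaging over `σ` needs only that `σ j` is uniform on `[n]` and, for `j ≠ k`, `(σ j, σ k)` is
uniform on the ordered pairs of distinct points. Since `Perm α` is 2-transitive, reindexing by a
right translation shows that `∑ σ, g (σ j) (σ k)` does not depend on the pair `j ≠ k`; summing over
all `n (n - 1)` such pairs and exchanging the sums gives `n! * ∑_{r ≠ s} g r s`. Finally, inclusion–exclusion over the diagonals `j = k` and
`r = s` writes `∑_{j ≠ k} ∑_{r ≠ s} p j r * p k s` through the total, row, column and squared sums.
-/

open Finset Real

/-- Probability weight of an outcome `x` of the Bernoulli matrix `(X_{j,r})` with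
success probabilities `p`, the entries being independent. -/
noncomputable def bw (n : ℕ) (p : Fin n → Fin n → ℝ) (x : Fin n → Fin n → Bool) : ℝ :=
  ∏ j : Fin n, ∏ r : Fin n, if x j r then p j r else 1 - p j r

/-- Expectation of `f (X, π)` where the Bernoulli matrix `X` (independent entries with
success probabilities `p`) and the uniformly distributed random permutation `π` are
independent. -/
noncomputable def dExp (n : ℕ) (p : Fin n → Fin n → ℝ)
    (f : (Fin n → Fin n → Bool) → Equiv.Perm (Fin n) → ℝ) : ℝ :=
  ((n.factorial : ℝ))⁻¹ *
    ∑ σ : Equiv.Perm (Fin n), ∑ x : Fin n → Fin n → Bool, bw n p x * f x σ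

/-- The random diagonal sum `S_n = ∑ j, X_{j,π(j)}` as a function of the outcome. -/
noncomputable def dSum (n : ℕ) (x : Fin n → Fin n → Bool) (σ : Equiv.Perm (Fin n)) : ℝ :=
  ∑ j : Fin n, if x j (σ j) then (1:ℝ) else 0

/-- The variance of the random diagonal sum `S_n`. -/
noncomputable def dVar (n : ℕ) (p : Fin n → Fin n → ℝ) : ℝ :=
  dExp n p (fun x σ => (dSum n x σ)^2) - (dExp n p (dSum n))^2

section Bernoulli

variable {ι R : Type*} [Fintype ι] [DecidableEq ι] [CommRing R]

theorem sum_prod_bernoulli_mul_prod_indicator (q : ι → R) (s : Finset ι) :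
    ∑ x : ι → Bool,
        (∏ i, if x i then q i else 1 - q i) * ∏ i ∈ s, (if x i then (1 : R) else 0)
      = ∏ i ∈ s, q i := by
  calc _ = ∑ x : ι → Bool, ∏ i,
          (if x i then q i else 1 - q i) *
            (if i ∈ s then (if x i then (1 : R) else 0) else 1) := by
        refine Fintype.sum_congr _ _ fun x => ?_
        rw [prod_mul_distrib, Fintype.prod_ite_mem]
    _ = ∏ i, ∑ b : Bool,
          (if b then q i else 1 - q i) * (if i ∈ s then (if b then (1 : R) else 0) else 1) := by
        rw [Fintype.prod_sum]
    _ = ∏ i, if i ∈ s then q i else 1 := by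
        refine Fintype.prod_congr _ _ fun i => ?_
        by_cases hi : i ∈ s <;> simp [hi]
    _ = _ := Fintype.prod_ite_mem _ _

end Bernoulli

section Perm

open Equiv

variable {α R : Type*} [Fintype α] [DecidableEq α]

theorem sum_sum_ite_eq_zero [AddCommGroup R] (g : α → α → R) :
    ∑ r, ∑ s, (if r = s then 0 else g r s) = ∑ r, ∑ s, g r s - ∑ r, g r r := by
  have h : ∀ r s, (if r = s then 0 else g r s) = g r s - if r = s then g r s else 0 := by
    intro r s
    split_ifs <;> simp_all
  simp only [h, sum_sub_distrib, sum_ite_eq, mem_univ, if_true]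

theorem sum_offDiag_sum_offDiag_mul [CommRing R] (p : α → α → R) :
    ∑ j, ∑ k, (if j = k then 0 else ∑ r, ∑ s, if r = s then 0 else p j r * p k s)
      = (∑ j, ∑ r, p j r) ^ 2 - ∑ j, (∑ r, p j r) ^ 2 - ∑ r, (∑ j, p j r) ^ 2
        + ∑ j, ∑ r, p j r ^ 2 := by
  have hcol : ∑ r, ∑ j, ∑ k, p j r * p k r = ∑ j, ∑ k, ∑ r, p j r * p k r :=
    sum_comm.trans (Fintype.sum_congr _ _ fun j => sum_comm)
  simp only [sum_sum_ite_eq_zero, sum_sub_distrib, sq, sum_mul_sum, hcol]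
  ring

theorem card_mul_sum_perm_apply [CommSemiring R] (f : α → R) (j : α) :
    (Fintype.card α : R) * ∑ σ : Perm α, f (σ j)
      = ((Fintype.card α).factorial : R) * ∑ r, f r := by
  have hk : ∀ k, ∑ σ : Perm α, f (σ k) = ∑ σ : Perm α, f (σ j) := fun k => by
    simpa using sum_comp (Equiv.mulRight (swap j k)) (fun σ : Perm α => f (σ j))
  calc _ = ∑ k, ∑ σ : Perm α, f (σ k) := by simp [hk]
    _ = ∑ σ : Perm α, ∑ k, f (σ k) := sum_comm
    _ = ∑ σ : Perm α, ∑ r, f r := Fintype.sum_congr _ _ fun σ => sum_comp σ f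
    _ = _ := by simp [Fintype.card_perm]

theorem card_mul_card_sub_one_mul_sum_perm_apply_apply [CommRing R] (g : α → α → R) {j k : α}
    (hjk : j ≠ k) :
    (Fintype.card α : R) * (Fintype.card α - 1) * ∑ σ : Perm α, g (σ j) (σ k)
      = ((Fintype.card α).factorial : R) * ∑ r, ∑ s, if r = s then 0 else g r s := by
  have hsame : ∀ j' k', j' ≠ k' →
      ∑ σ : Perm α, g (σ j') (σ k') = ∑ σ : Perm α, g (σ j) (σ k) := by
    intro j' k' h
    obtain ⟨τ, hτj, hτk⟩ := MulAction.is_two_pretransitive_iff.mp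
      (Equiv.Perm.isMultiplyPretransitive α 2) hjk h
    rw [Equiv.Perm.smul_def] at hτj hτk
    simpa [hτj, hτk] using sum_comp (Equiv.mulRight τ) (fun σ : Perm α => g (σ j) (σ k))
  calc _ = ∑ j', ∑ k', ∑ σ : Perm α, if j' = k' then 0 else g (σ j') (σ k') := by
        have hterm : ∀ j' k', ∑ σ : Perm α, (if j' = k' then 0 else g (σ j') (σ k'))
            = if j' = k' then 0 else ∑ σ : Perm α, g (σ j) (σ k) := by
          intro j' k'
          split_ifs with h
          · simp
          · exact hsame j' k' h
        simp only [hterm, sum_sum_ite_eq_zero, sum_const, card_univ, nsmul_eq_mul]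
        ring
    _ = ∑ σ : Perm α, ∑ j', ∑ k', if j' = k' then 0 else g (σ j') (σ k') :=
        (Fintype.sum_congr _ _ fun j' => sum_comm).trans sum_comm
    _ = ∑ σ : Perm α, ∑ r, ∑ s, if r = s then 0 else g r s := by
        refine Fintype.sum_congr _ _ fun σ => ?_
        rw [← sum_comp σ (fun r => ∑ s, if r = s then 0 else g r s)]
        refine Fintype.sum_congr _ _ fun j' => ?_
        rw [← sum_comp σ (fun s => if σ j' = s then 0 else g (σ j') s)]
        simp only [σ.injective.eq_iff]
    _ = _ := by simp [Fintype.card_perm]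

variable {K : Type*} [Field K] [CharZero K]

theorem inv_factorial_mul_sum_perm_apply (f : α → K) (j : α) :
    ((Fintype.card α).factorial : K)⁻¹ * ∑ σ : Perm α, f (σ j)
      = (Fintype.card α : K)⁻¹ * ∑ r, f r := by
  have : Nonempty α := ⟨j⟩
  have hα : (Fintype.card α : K) ≠ 0 := Nat.cast_ne_zero.2 Fintype.card_ne_zero
  have hfac : ((Fintype.card α).factorial : K) ≠ 0 := by
    exact_mod_cast Nat.factorial_ne_zero _
  field_simp
  linear_combination card_mul_sum_perm_apply f j

theorem inv_factorial_mul_sum_perm_apply_apply (g : α → α → K) {j k : α} (hjk : j ≠ k) :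
    ((Fintype.card α).factorial : K)⁻¹ * ∑ σ : Perm α, g (σ j) (σ k)
      = ((Fintype.card α : K) * (Fintype.card α - 1))⁻¹ *
        ∑ r, ∑ s, if r = s then 0 else g r s := by
  have hα : 1 < Fintype.card α := Fintype.one_lt_card_iff.2 ⟨j, k, hjk⟩
  have hα₀ : (Fintype.card α : K) ≠ 0 := Nat.cast_ne_zero.2 (by omega)
  have hα₁ : (Fintype.card α : K) - 1 ≠ 0 := sub_ne_zero.2 (by exact_mod_cast hα.ne')
  have hfac : ((Fintype.card α).factorial : K) ≠ 0 := by
    exact_mod_cast Nat.factorial_ne_zero _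
  field_simp
  linear_combination card_mul_card_sub_one_mul_sum_perm_apply_apply g hjk

theorem inv_factorial_mul_sum_perm_sum_apply (p : α → α → K) :
    ((Fintype.card α).factorial : K)⁻¹ * ∑ σ : Perm α, ∑ j, p j (σ j)
      = (Fintype.card α : K)⁻¹ * ∑ j, ∑ r, p j r := by
  rw [sum_comm, mul_sum, mul_sum]
  exact Fintype.sum_congr _ _ fun j => inv_factorial_mul_sum_perm_apply (p j) j

theorem inv_factorial_mul_sum_perm_sum_offDiag_apply (p : α → α → K) :
    ((Fintype.card α).factorial : K)⁻¹ *
        ∑ σ : Perm α, ∑ j, ∑ k, (if j = k then 0 else p j (σ j) * p k (σ k))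
      = ((Fintype.card α : K) * (Fintype.card α - 1))⁻¹ *
        ((∑ j, ∑ r, p j r) ^ 2 - ∑ j, (∑ r, p j r) ^ 2 - ∑ r, (∑ j, p j r) ^ 2
          + ∑ j, ∑ r, p j r ^ 2) := by
  rw [← sum_offDiag_sum_offDiag_mul, sum_comm, mul_sum, mul_sum]
  refine Fintype.sum_congr _ _ fun j => ?_
  rw [sum_comm, mul_sum, mul_sum]
  refine Fintype.sum_congr _ _ fun k => ?_
  split_ifs with hjk
  · simp
  · exact inv_factorial_mul_sum_perm_apply_apply (fun r s => p j r * p k s) hjk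

end Perm

section DiagonalSum

variable {n : ℕ} (p : Fin n → Fin n → ℝ)

theorem sum_bw_mul_prod_indicator (s : Finset (Fin n × Fin n)) :
    ∑ x : Fin n → Fin n → Bool, bw n p x * ∏ i ∈ s, (if x i.1 i.2 then (1 : ℝ) else 0)
      = ∏ i ∈ s, p i.1 i.2 := by
  rw [← sum_prod_bernoulli_mul_prod_indicator (fun i : Fin n × Fin n => p i.1 i.2) s,
    ← Equiv.sum_comp (Equiv.curry (Fin n) (Fin n) Bool)]
  simp only [bw, Fintype.prod_prod_type]
  rfl

theorem sum_bw_mul_dSum (σ : Equiv.Perm (Fin n)) :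
    ∑ x, bw n p x * dSum n x σ = ∑ j, p j (σ j) := by
  simp only [dSum, mul_sum]
  rw [sum_comm]
  exact Fintype.sum_congr _ _ fun j => by simpa using sum_bw_mul_prod_indicator p {(j, σ j)}

theorem sum_bw_mul_dSum_sq (σ : Equiv.Perm (Fin n)) :
    ∑ x, bw n p x * dSum n x σ ^ 2
      = ∑ j, p j (σ j) + ∑ j, ∑ k, if j = k then 0 else p j (σ j) * p k (σ k) := by
  have hpair : ∀ j k, ∑ x, bw n p x *
      ((if x j (σ j) then (1 : ℝ) else 0) * (if x k (σ k) then (1 : ℝ) else 0))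
        = if j = k then p j (σ j) else p j (σ j) * p k (σ k) := by
    intro j k
    split_ifs with hjk
    · subst hjk
      rw [← prod_singleton (fun i : Fin n × Fin n => p i.1 i.2) (j, σ j),
        ← sum_bw_mul_prod_indicator]
      refine Fintype.sum_congr _ _ fun x => ?_
      by_cases hx : x j (σ j) <;> simp [hx]
    · have hne : (j, σ j) ≠ (k, σ k) := fun h => hjk (congrArg Prod.fst h)
      simpa [prod_pair hne] using sum_bw_mul_prod_indicator p {(j, σ j), (k, σ k)}
  have hsplit : ∀ j k, (if j = k then p j (σ j) else p j (σ j) * p k (σ k))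
      = (if j = k then p j (σ j) else 0) + if j = k then 0 else p j (σ j) * p k (σ k) := by
    intro j k
    split_ifs <;> simp
  calc _ = ∑ j, ∑ k, ∑ x, bw n p x *
          ((if x j (σ j) then (1 : ℝ) else 0) * (if x k (σ k) then (1 : ℝ) else 0)) := by
        simp only [dSum, sq, sum_mul_sum]
        simp only [mul_sum]
        exact sum_comm.trans (Fintype.sum_congr _ _ fun j => sum_comm)
    _ = _ := by simp only [hpair, hsplit, sum_add_distrib, sum_ite_eq, mem_univ, if_true]

theorem dExp_dSum : dExp n p (dSum n) = (n : ℝ)⁻¹ * ∑ j, ∑ r, p j r := by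
  simpa [dExp, sum_bw_mul_dSum] using inv_factorial_mul_sum_perm_sum_apply (K := ℝ) p

theorem dExp_dSum_sq :
    dExp n p (fun x σ => dSum n x σ ^ 2)
      = (n : ℝ)⁻¹ * ∑ j, ∑ r, p j r + ((n : ℝ) * (n - 1))⁻¹ *
        ((∑ j, ∑ r, p j r) ^ 2 - ∑ j, (∑ r, p j r) ^ 2 - ∑ r, (∑ j, p j r) ^ 2
          + ∑ j, ∑ r, p j r ^ 2) := by
  have hdiag := inv_factorial_mul_sum_perm_sum_apply (K := ℝ) p
  have hoff := inv_factorial_mul_sum_perm_sum_offDiag_apply (K := ℝ) p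
  simp only [Fintype.card_fin] at hdiag hoff
  rw [dExp, Fintype.sum_congr _ _ (sum_bw_mul_dSum_sq p), sum_add_distrib, mul_add, hdiag, hoff]

end DiagonalSum

theorem var_diag_sum_formula_general (n : ℕ) (hn : 2 ≤ n) (p : Fin n → Fin n → ℝ) :
    dVar n p
      = (n:ℝ)⁻¹ * (∑ j : Fin n, ∑ r : Fin n, p j r)
        - ((n:ℝ) / ((n:ℝ) - 1)) *
            (∑ j : Fin n, ((n:ℝ)⁻¹ * ∑ r : Fin n, p j r)^2
             + ∑ r : Fin n, ((n:ℝ)⁻¹ * ∑ j : Fin n, p j r)^2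
             - ((n:ℝ)^2)⁻¹ * ∑ j : Fin n, ∑ r : Fin n, (p j r)^2
             - ((n:ℝ)⁻¹ * ∑ j : Fin n, ∑ r : Fin n, p j r)^2 / n) := by
  have hn₀ : (n : ℝ) ≠ 0 := by positivity
  have hn₁ : (n : ℝ) - 1 ≠ 0 := sub_ne_zero.2 (by exact_mod_cast (by omega : n ≠ 1))
  rw [dVar, dExp_dSum, dExp_dSum_sq]
  simp only [mul_pow, ← mul_sum]
  field_simp
  ring

theorem var_diag_sum_formula (n : ℕ) (hn : 2 ≤ n) (p : Fin n → Fin n → ℝ)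
    (hp : ∀ j r, p j r ∈ Set.Icc (0:ℝ) 1) :
    dVar n p
      = (n:ℝ)⁻¹ * (∑ j : Fin n, ∑ r : Fin n, p j r)
        - ((n:ℝ) / ((n:ℝ) - 1)) *
            (∑ j : Fin n, ((n:ℝ)⁻¹ * ∑ r : Fin n, p j r)^2
             + ∑ r : Fin n, ((n:ℝ)⁻¹ * ∑ j : Fin n, p j r)^2
             - ((n:ℝ)^2)⁻¹ * ∑ j : Fin n, ∑ r : Fin n, (p j r)^2
             - ((n:ℝ)⁻¹ * ∑ j : Fin n, ∑ r : Fin n, p j r)^2 / n) :=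
  var_diag_sum_formula_general n hn p
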